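/- Extractor identity for the trusted-center protocol: for any POVM {Π_{x,z}} on N qubits, the state η := (1/2^N) ∑_{x,z} Z^z X^x Π_{x,z} X^x Z^z satisfies: the verifier's acceptance probability (1/2^{N+1}) ∑_{h,m} ∑_{x,z} Tr[Π_{x,z}(H^⊗N)^h|m⟩⟨m|(H^⊗N)^h] · ∑_{i<j} p_{i,j}(1−s_{i,j}(−1)^{m_i'+m_j'})/2 equals 1 − Tr(𝓗 η). Hence if the acceptance probability is at least 1 − ε, then Tr(𝓗 η) ≤ ε. -/

import Mathlib

open Matrix Finset Kronecker BigOperators ComplexOrder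

noncomputable section

/-- Pauli X matrix. -/
def Xm : Matrix (Fin 2) (Fin 2) ℂ := !![0, 1; 1, 0]
/-- Pauli Z matrix. -/
def Zm : Matrix (Fin 2) (Fin 2) ℂ := !![1, 0; 0, -1]
/-- Hadamard matrix. -/
def Hm : Matrix (Fin 2) (Fin 2) ℂ := (Real.sqrt 2 : ℂ)⁻¹ • !![1, 1; 1, -1]

/-- Tensor product of a family of one-qubit operators, as an operator on `N` qubits. -/
def tens {N : ℕ} (M : Fin N → Matrix (Fin 2) (Fin 2) ℂ) :
    Matrix (Fin N → Fin 2) (Fin N → Fin 2) ℂ :=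
  Matrix.of fun a b => ∏ j, M j (a j) (b j)

/-- `X^x = ⊗_j X^{x_j}`. -/
def Xpow {N : ℕ} (x : Fin N → Fin 2) : Matrix (Fin N → Fin 2) (Fin N → Fin 2) ℂ :=
  tens fun j => Xm ^ (x j).val

/-- `Z^z = ⊗_j Z^{z_j}`. -/
def Zpow {N : ℕ} (z : Fin N → Fin 2) : Matrix (Fin N → Fin 2) (Fin N → Fin 2) ℂ :=
  tens fun j => Zm ^ (z j).val

/-- `H^{⊗N}`. -/
def Hall (N : ℕ) : Matrix (Fin N → Fin 2) (Fin N → Fin 2) ℂ := tens fun _ => Hm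

/-- Computational basis vector `|m⟩`. -/
def ketv {N : ℕ} (m : Fin N → Fin 2) : (Fin N → Fin 2) → ℂ := fun a => if a = m then 1 else 0

/-- `X_i ⊗ X_j` (Pauli X on qubits i and j, identity elsewhere). -/
def XXt {N : ℕ} (i j : Fin N) : Matrix (Fin N → Fin 2) (Fin N → Fin 2) ℂ :=
  tens fun k => if k = i ∨ k = j then Xm else 1

/-- `Z_i ⊗ Z_j`. -/
def ZZt {N : ℕ} (i j : Fin N) : Matrix (Fin N → Fin 2) (Fin N → Fin 2) ℂ :=
  tens fun k => if k = i ∨ k = j then Zm else 1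

/-- Ordered pairs i < j. -/
def pairs (N : ℕ) : Finset (Fin N × Fin N) := Finset.univ.filter fun q => q.1 < q.2

/-- The local Hamiltonian `𝓗`. -/
def ham {N : ℕ} (p s : Fin N × Fin N → ℝ) : Matrix (Fin N → Fin 2) (Fin N → Fin 2) ℂ :=
  ∑ q ∈ pairs N, ((p q : ℂ) / 2) •
    ((2:ℂ)⁻¹ • (1 + (s q : ℂ) • XXt q.1 q.2) + (2:ℂ)⁻¹ • (1 + (s q : ℂ) • ZZt q.1 q.2))

/-- The diagonal Hamiltonian `𝓗_Z`. -/
def hamZ {N : ℕ} (p s : Fin N × Fin N → ℝ) : Matrix (Fin N → Fin 2) (Fin N → Fin 2) ℂ :=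
  ∑ q ∈ pairs N, (p q : ℂ) • ((2:ℂ)⁻¹ • (1 + (s q : ℂ) • ZZt q.1 q.2))

/-- Acceptance weight `∑_{i<j} p_{ij} (1 - s_{ij} (-1)^{m_i+m_j})/2`. -/
def wgt {N : ℕ} (p s : Fin N × Fin N → ℝ) (m : Fin N → Fin 2) : ℂ :=
  ∑ q ∈ pairs N, (p q : ℂ) * (1 - (s q : ℂ) * (-1 : ℂ) ^ ((m q.1).val + (m q.2).val)) / 2

/-- `m'_i = m_i ⊕ (h z_i + (1-h) x_i)` (XOR in `Fin 2`). -/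
def mprime {N : ℕ} (h : Fin 2) (m x z : Fin N → Fin 2) : Fin N → Fin 2 :=
  fun i => m i + (if h = 0 then x i else z i)

/-- Bell state `|φ_{α,β}⟩ = (Z^β ⊗ X^α)(|00⟩+|11⟩)/√2` as a vector on `Fin 2 × Fin 2`. -/
def bell (α β : Fin 2) : Fin 2 × Fin 2 → ℂ :=
  Matrix.mulVec ((Zm ^ β.val) ⊗ₖ (Xm ^ α.val))
    (fun q => if q.1 = q.2 then (Real.sqrt 2 : ℂ)⁻¹ else 0)

/-! ### Auxiliary lemmas -/

section Aux

variable {N : ℕ}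

lemma tens_mul (M M' : Fin N → Matrix (Fin 2) (Fin 2) ℂ) :
    tens M * tens M' = tens fun j => M j * M' j := by
  ext a b
  simp only [tens, Matrix.mul_apply, Matrix.of_apply, Fintype.prod_sum]
  exact Finset.sum_congr rfl fun x _ => (Finset.prod_mul_distrib).symm

lemma tens_one : tens (fun _ : Fin N => (1 : Matrix (Fin 2) (Fin 2) ℂ)) = 1 := by
  ext a b
  by_cases h : a = b
  · subst h; simp [tens, Matrix.one_apply]
  · obtain ⟨j, hj⟩ := Function.ne_iff.mp h
    simp only [tens, Matrix.of_apply, Matrix.one_apply, if_neg h]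
    exact Finset.prod_eq_zero (Finset.mem_univ j) (by simp [Matrix.one_apply, hj])

lemma tens_smul (c : Fin N → ℂ) (M : Fin N → Matrix (Fin 2) (Fin 2) ℂ) :
    tens (fun j => c j • M j) = (∏ j, c j) • tens M := by
  ext a b
  simp [tens, Finset.prod_mul_distrib]

lemma sqrt2_inv_sq : ((Real.sqrt 2 : ℂ))⁻¹ * ((Real.sqrt 2 : ℂ))⁻¹ = 2⁻¹ := by
  rw [← mul_inv, ← Complex.ofReal_mul, Real.mul_self_sqrt (by norm_num)]
  norm_num

lemma Xm_mul_Xm : Xm * Xm = 1 := by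
  simp [Xm]; exact Matrix.one_fin_two.symm

lemma Zm_mul_Zm : Zm * Zm = 1 := by
  simp [Zm]; exact Matrix.one_fin_two.symm

lemma Hm_mul_Hm : Hm * Hm = 1 := by
  simp only [Hm, Matrix.smul_mul, Matrix.mul_smul, smul_smul, sqrt2_inv_sq]
  have : (!![1, 1; 1, -1] : Matrix (Fin 2) (Fin 2) ℂ) * !![1, 1; 1, -1] = !![2,0;0,2] := by
    simp; norm_num
  rw [this, Matrix.one_fin_two]
  ext i j; fin_cases i <;> fin_cases j <;> norm_num

lemma Hm_Zm_Hm : Hm * Zm * Hm = Xm := by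
  simp only [Hm, Matrix.smul_mul, Matrix.mul_smul, smul_smul, sqrt2_inv_sq]
  have : (!![1, 1; 1, -1] : Matrix (Fin 2) (Fin 2) ℂ) * Zm * !![1, 1; 1, -1] = !![0,2;2,0] := by
    simp [Zm]; norm_num
  rw [this, Xm]
  ext i j; fin_cases i <;> fin_cases j <;> norm_num

lemma Xm_Zm_Xm : Xm * Zm * Xm = -Zm := by simp [Xm, Zm]

lemma Zm_Xm_Zm : Zm * Xm * Zm = -Xm := by simp [Xm, Zm]

lemma Xv_sq (v : Fin 2) : Xm ^ v.val * Xm ^ v.val = 1 := by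
  fin_cases v
  · simp
  · simpa using Xm_mul_Xm

lemma Zv_sq (v : Fin 2) : Zm ^ v.val * Zm ^ v.val = 1 := by
  fin_cases v
  · simp
  · simpa using Zm_mul_Zm

lemma Xv_Zm_Xv (v : Fin 2) : Xm ^ v.val * Zm * Xm ^ v.val = ((-1:ℂ)) ^ v.val • Zm := by
  fin_cases v
  · simp
  · simpa using Xm_Zm_Xm.trans (by simp)

lemma Zv_Xm_Zv (v : Fin 2) : Zm ^ v.val * Xm * Zm ^ v.val = ((-1:ℂ)) ^ v.val • Xm := by
  fin_cases v
  · simp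
  · simpa using Zm_Xm_Zm.trans (by simp)

lemma Xv_Xm_Xv (v : Fin 2) : Xm ^ v.val * Xm * Xm ^ v.val = Xm := by
  fin_cases v
  · simp
  · simp only [Fin.val_one, pow_one]
    rw [Xm_mul_Xm, one_mul]

lemma Zv_Zm_Zv (v : Fin 2) : Zm ^ v.val * Zm * Zm ^ v.val = Zm := by
  fin_cases v
  · simp
  · simp only [Fin.val_one, pow_one]
    rw [Zm_mul_Zm, one_mul]

lemma Zm_dd (d : Fin 2) : Zm d d = (-1:ℂ) ^ d.val := by
  fin_cases d <;> simp [Zm]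

lemma Zm_ne (d e : Fin 2) (h : d ≠ e) : Zm d e = 0 := by
  fin_cases d <;> fin_cases e <;> simp_all [Zm]

lemma prod_if_pair {i j : Fin N} (hij : i ≠ j) (g : Fin N → ℂ) :
    ∏ k, (if k = i ∨ k = j then g k else 1) = g i * g j := by
  calc ∏ k, (if k = i ∨ k = j then g k else 1)
      = ∏ k, (if k ∈ ({i, j} : Finset (Fin N)) then g k else 1) := by
        simp [Finset.mem_insert]
    _ = ∏ k ∈ (Finset.univ ∩ ({i,j} : Finset (Fin N))), g k := Finset.prod_ite_mem _ _ _
    _ = ∏ k ∈ ({i,j} : Finset (Fin N)), g k := by rw [Finset.univ_inter]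
    _ = g i * g j := Finset.prod_pair hij

lemma Xpow_mul_Xpow (x : Fin N → Fin 2) : Xpow x * Xpow x = 1 := by
  rw [Xpow, tens_mul]
  have : (fun j => Xm ^ (x j).val * Xm ^ (x j).val) = fun _ : Fin N => (1 : Matrix (Fin 2) (Fin 2) ℂ) :=
    funext fun j => Xv_sq (x j)
  rw [this, tens_one]

lemma Zpow_mul_Zpow (z : Fin N → Fin 2) : Zpow z * Zpow z = 1 := by
  rw [Zpow, tens_mul]
  have : (fun j => Zm ^ (z j).val * Zm ^ (z j).val) = fun _ : Fin N => (1 : Matrix (Fin 2) (Fin 2) ℂ) :=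
    funext fun j => Zv_sq (z j)
  rw [this, tens_one]

lemma Hall_mul_Hall : Hall N * Hall N = 1 := by
  rw [Hall, tens_mul]
  have : (fun j : Fin N => Hm * Hm) = fun _ : Fin N => (1 : Matrix (Fin 2) (Fin 2) ℂ) :=
    funext fun j => Hm_mul_Hm
  rw [this, tens_one]

lemma Hall_ZZt_Hall {i j : Fin N} : Hall N * ZZt i j * Hall N = XXt i j := by
  rw [Hall, ZZt, XXt, tens_mul, tens_mul]
  have hfac : (fun k : Fin N => Hm * (if k = i ∨ k = j then Zm else 1) * Hm)
      = fun k => (if k = i ∨ k = j then Xm else 1) := by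
    funext k
    by_cases hk : k = i ∨ k = j
    · simp only [if_pos hk]; exact Hm_Zm_Hm
    · simp only [if_neg hk, mul_one]; exact Hm_mul_Hm
  rw [hfac]

lemma Xpow_ZZt_Xpow (x : Fin N → Fin 2) {i j : Fin N} (hij : i ≠ j) :
    Xpow x * ZZt i j * Xpow x = ((-1:ℂ)) ^ ((x i).val + (x j).val) • ZZt i j := by
  rw [Xpow, ZZt, tens_mul, tens_mul]
  have hfac : (fun k => Xm ^ (x k).val * (if k = i ∨ k = j then Zm else 1) * Xm ^ (x k).val)
      = fun k => (if k = i ∨ k = j then ((-1:ℂ)) ^ ((x k).val) else 1) •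
          (if k = i ∨ k = j then Zm else 1) := by
    funext k
    by_cases hk : k = i ∨ k = j
    · simp only [if_pos hk]; exact Xv_Zm_Xv (x k)
    · simp only [if_neg hk, mul_one, one_smul]; exact Xv_sq (x k)
  rw [hfac, tens_smul, prod_if_pair hij, pow_add]

lemma Zpow_XXt_Zpow (z : Fin N → Fin 2) {i j : Fin N} (hij : i ≠ j) :
    Zpow z * XXt i j * Zpow z = ((-1:ℂ)) ^ ((z i).val + (z j).val) • XXt i j := by
  rw [Zpow, XXt, tens_mul, tens_mul]
  have hfac : (fun k => Zm ^ (z k).val * (if k = i ∨ k = j then Xm else 1) * Zm ^ (z k).val)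
      = fun k => (if k = i ∨ k = j then ((-1:ℂ)) ^ ((z k).val) else 1) •
          (if k = i ∨ k = j then Xm else 1) := by
    funext k
    by_cases hk : k = i ∨ k = j
    · simp only [if_pos hk]; exact Zv_Xm_Zv (z k)
    · simp only [if_neg hk, mul_one, one_smul]; exact Zv_sq (z k)
  rw [hfac, tens_smul, prod_if_pair hij, pow_add]

lemma Xpow_XXt_Xpow (x : Fin N → Fin 2) {i j : Fin N} :
    Xpow x * XXt i j * Xpow x = XXt i j := by
  rw [Xpow, XXt, tens_mul, tens_mul]
  have hfac : (fun k => Xm ^ (x k).val * (if k = i ∨ k = j then Xm else 1) * Xm ^ (x k).val)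
      = fun k => (if k = i ∨ k = j then Xm else 1) := by
    funext k
    by_cases hk : k = i ∨ k = j
    · simp only [if_pos hk]; exact Xv_Xm_Xv (x k)
    · simp only [if_neg hk, mul_one]; exact Xv_sq (x k)
  rw [hfac]

lemma Zpow_ZZt_Zpow (z : Fin N → Fin 2) {i j : Fin N} :
    Zpow z * ZZt i j * Zpow z = ZZt i j := by
  rw [Zpow, ZZt, tens_mul, tens_mul]
  have hfac : (fun k => Zm ^ (z k).val * (if k = i ∨ k = j then Zm else 1) * Zm ^ (z k).val)
      = fun k => (if k = i ∨ k = j then Zm else 1) := by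
    funext k
    by_cases hk : k = i ∨ k = j
    · simp only [if_pos hk]; exact Zv_Zm_Zv (z k)
    · simp only [if_neg hk, mul_one]; exact Zv_sq (z k)
  rw [hfac]

lemma ZZt_diag {i j : Fin N} (hij : i ≠ j) :
    ZZt i j = Matrix.diagonal fun m => ((-1:ℂ)) ^ ((m i).val + (m j).val) := by
  ext a b
  by_cases hab : a = b
  · subst hab
    rw [Matrix.diagonal_apply_eq]
    show (∏ k, (if k = i ∨ k = j then Zm else 1) (a k) (a k)) = _
    have : ∀ k, (if k = i ∨ k = j then Zm else 1) (a k) (a k)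
        = (if k = i ∨ k = j then ((-1:ℂ)) ^ ((a k).val) else 1) := by
      intro k
      by_cases hk : k = i ∨ k = j
      · simp only [if_pos hk]; exact Zm_dd (a k)
      · simp only [if_neg hk, Matrix.one_apply_eq]
    rw [Finset.prod_congr rfl fun k _ => this k, prod_if_pair hij, pow_add]
  · rw [Matrix.diagonal_apply_ne _ hab]
    obtain ⟨k, hk⟩ := Function.ne_iff.mp hab
    refine Finset.prod_eq_zero (Finset.mem_univ k) ?_
    by_cases hkij : k = i ∨ k = j
    · simp only [if_pos hkij]; exact Zm_ne _ _ hk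
    · simp only [if_neg hkij]; exact Matrix.one_apply_ne hk

lemma neg_pow_fin (a b : Fin 2) :
    ((-1:ℂ)) ^ ((a + b : Fin 2)).val = (-1:ℂ) ^ a.val * (-1:ℂ) ^ b.val := by
  fin_cases a <;> fin_cases b <;> simp [Fin.val] <;> norm_num

lemma diag_eq_sum (f : (Fin N → Fin 2) → ℂ) :
    Matrix.diagonal f = ∑ m : Fin N → Fin 2, f m • Matrix.single m m (1:ℂ) := by
  ext a b
  rw [Matrix.sum_apply]
  by_cases hab : a = b
  · subst hab
    rw [Matrix.diagonal_apply_eq]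
    rw [Finset.sum_eq_single a]
    · simp [Matrix.single]
    · intro m _ hma
      simp only [Matrix.smul_apply, Matrix.single, Matrix.of_apply]
      rw [if_neg (fun hc : m = a ∧ m = a => hma hc.1), smul_zero]
    · intro h; exact absurd (Finset.mem_univ a) h
  · rw [Matrix.diagonal_apply_ne _ hab]
    refine ((Finset.sum_eq_zero fun m _ => ?_)).symm
    have : ¬ (m = a ∧ m = b) := fun ⟨h1, h2⟩ => hab (h1 ▸ h2 ▸ rfl)
    simp only [Matrix.smul_apply, Matrix.single, Matrix.of_apply]
    rw [if_neg this, smul_zero]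

lemma conj_smul {n : Type*} [Fintype n] (U A : Matrix n n ℂ) (c : ℂ) :
    U * (c • A) * U = c • (U * A * U) := by
  rw [Matrix.mul_smul, Matrix.smul_mul]

lemma conj_add {n : Type*} [Fintype n] (U A B : Matrix n n ℂ) :
    U * (A + B) * U = U * A * U + U * B * U := by
  rw [mul_add, add_mul]

lemma conj_aff {n : Type*} [Fintype n] [DecidableEq n] {U A B : Matrix n n ℂ} {e : ℂ}
    (hUU : U * U = 1) (hAB : U * A * U = e • B) (c d : ℂ) :
    U * (c • (1 + d • A)) * U = c • (1 + (e * d) • B) := by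
  calc U * (c • (1 + d • A)) * U
      = c • ((U * (1 + d • A)) * U) := by rw [Matrix.mul_smul, Matrix.smul_mul]
    _ = c • (U * U + d • (U * A * U)) := by
        rw [mul_add, mul_one, Matrix.mul_smul, add_mul, Matrix.smul_mul]
    _ = c • (1 + (e * d) • B) := by rw [hUU, hAB, smul_smul, mul_comm d e]

lemma conj_aff_sub {n : Type*} [Fintype n] [DecidableEq n] {U A B : Matrix n n ℂ} {e : ℂ}
    (hUU : U * U = 1) (hAB : U * A * U = e • B) (c d : ℂ) :
    U * (c • (1 - d • A)) * U = c • (1 - (e * d) • B) := by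
  calc U * (c • (1 - d • A)) * U
      = c • ((U * (1 - d • A)) * U) := by rw [Matrix.mul_smul, Matrix.smul_mul]
    _ = c • (U * U - d • (U * A * U)) := by
        rw [mul_sub, mul_one, Matrix.mul_smul, sub_mul, Matrix.smul_mul]
    _ = c • (1 - (e * d) • B) := by rw [hUU, hAB, smul_smul, mul_comm d e]

lemma pairs_ne {q : Fin N × Fin N} (hq : q ∈ pairs N) : q.1 ≠ q.2 :=
  ne_of_lt (by simpa [pairs] using hq)

lemma quad_id {n : Type*} [Fintype n] [DecidableEq n] (A B : Matrix n n ℂ) (P S ex ez : ℂ) :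
    (P/2) • ((1:Matrix n n ℂ) - (S*ex) • A) + (P/2) • ((1:Matrix n n ℂ) - (1*(S*ez)) • B)
      = (2:ℂ) • (P • (1:Matrix n n ℂ)) - (2:ℂ) • ((P/2) •
          ((2:ℂ)⁻¹ • (1 + (ez*(1*S)) • B) + (2:ℂ)⁻¹ • (1 + (1*(ex*S)) • A))) := by
  module

lemma diag_wgt (p s : Fin N × Fin N → ℝ) (c : Fin N → Fin 2) :
    Matrix.diagonal (fun m => wgt p s (fun i => m i + c i)) =
      ∑ q ∈ pairs N, ((p q : ℂ)/2) •
        ((1 : Matrix (Fin N → Fin 2) (Fin N → Fin 2) ℂ)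
          - ((s q : ℂ) * (-1:ℂ) ^ ((c q.1).val + (c q.2).val)) • ZZt q.1 q.2) := by
  ext a b
  rw [Matrix.sum_apply]
  by_cases hab : a = b
  · subst hab
    rw [Matrix.diagonal_apply_eq, wgt]
    refine Finset.sum_congr rfl fun q hq => ?_
    have hij : q.1 ≠ q.2 := pairs_ne hq
    rw [Matrix.smul_apply, Matrix.sub_apply, Matrix.smul_apply, ZZt_diag hij,
      Matrix.diagonal_apply_eq, Matrix.one_apply_eq]
    simp only [smul_eq_mul, pow_add, neg_pow_fin]
    ring
  · rw [Matrix.diagonal_apply_ne _ hab]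
    refine (Finset.sum_eq_zero fun q hq => ?_).symm
    have hij : q.1 ≠ q.2 := pairs_ne hq
    rw [Matrix.smul_apply, Matrix.sub_apply, Matrix.smul_apply, ZZt_diag hij,
      Matrix.diagonal_apply_ne _ hab, Matrix.one_apply_ne hab]
    simp

lemma hsum_one (p : Fin N × Fin N → ℝ) (hpsum : ∑ q ∈ pairs N, p q = 1) :
    ∑ q ∈ pairs N, (p q : ℂ) • (1 : Matrix (Fin N → Fin 2) (Fin N → Fin 2) ℂ) = 1 := by
  rw [← Finset.sum_smul]
  have : (∑ q ∈ pairs N, (p q : ℂ)) = 1 := by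
    rw [← Complex.ofReal_sum, hpsum, Complex.ofReal_one]
  rw [this, one_smul]

lemma conj_ham (p s : Fin N × Fin N → ℝ) (x z : Fin N → Fin 2) :
    Xpow x * Zpow z * ham p s * Zpow z * Xpow x =
      ∑ q ∈ pairs N, ((p q : ℂ)/2) •
        ((2:ℂ)⁻¹ • (1 + (((-1:ℂ) ^ ((z q.1).val + (z q.2).val)) * ((1:ℂ) * (s q : ℂ))) • XXt q.1 q.2)
          + (2:ℂ)⁻¹ • (1 + ((1:ℂ) * (((-1:ℂ) ^ ((x q.1).val + (x q.2).val)) * (s q : ℂ))) • ZZt q.1 q.2)) := by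
  have assoc : Xpow x * Zpow z * ham p s * Zpow z * Xpow x
      = Xpow x * (Zpow z * ham p s * Zpow z) * Xpow x := by
    simp only [mul_assoc]
  rw [assoc]
  have hZ : Zpow z * ham p s * Zpow z =
      ∑ q ∈ pairs N, ((p q : ℂ)/2) •
        ((2:ℂ)⁻¹ • (1 + (((-1:ℂ) ^ ((z q.1).val + (z q.2).val)) * (s q : ℂ)) • XXt q.1 q.2)
          + (2:ℂ)⁻¹ • (1 + ((1:ℂ) * (s q : ℂ)) • ZZt q.1 q.2)) := by
    rw [ham, Finset.mul_sum, Finset.sum_mul]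
    refine Finset.sum_congr rfl fun q hq => ?_
    have hij : q.1 ≠ q.2 := pairs_ne hq
    rw [conj_smul, conj_add,
      conj_aff (Zpow_mul_Zpow z) (Zpow_XXt_Zpow z hij) _ _,
      conj_aff (Zpow_mul_Zpow z) ((Zpow_ZZt_Zpow z (i := q.1) (j := q.2)).trans (one_smul ℂ _).symm) _ _]
  rw [hZ, Finset.mul_sum, Finset.sum_mul]
  refine Finset.sum_congr rfl fun q hq => ?_
  have hij : q.1 ≠ q.2 := pairs_ne hq
  rw [conj_smul, conj_add,
    conj_aff (Xpow_mul_Xpow x) ((Xpow_XXt_Xpow x (i := q.1) (j := q.2)).trans (one_smul ℂ _).symm) _ _,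
    conj_aff (Xpow_mul_Xpow x) (Xpow_ZZt_Xpow x hij) _ _]
  module



lemma keyid (p s : Fin N × Fin N → ℝ) (hpsum : ∑ q ∈ pairs N, p q = 1) (x z : Fin N → Fin 2) :
    Matrix.diagonal (fun m => wgt p s (mprime 0 m x z)) +
      Hall N * Matrix.diagonal (fun m => wgt p s (mprime 1 m x z)) * Hall N
      = (2:ℂ) • 1 - (2:ℂ) • (Xpow x * Zpow z * ham p s * Zpow z * Xpow x) := by
  have hx : ∀ m : Fin N → Fin 2, mprime 0 m x z = fun i => m i + x i := by
    intro m; funext i; simp [mprime]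
  have hz : ∀ m : Fin N → Fin 2, mprime 1 m x z = fun i => m i + z i := by
    intro m; funext i; simp [mprime]
  have hm0 : (fun m => wgt p s (mprime 0 m x z)) = fun m => wgt p s (fun i => m i + x i) :=
    funext fun m => by rw [hx m]
  have hm1 : (fun m => wgt p s (mprime 1 m x z)) = fun m => wgt p s (fun i => m i + z i) :=
    funext fun m => by rw [hz m]
  rw [hm0, hm1, diag_wgt p s x, diag_wgt p s z]
  have hHconj : Hall N * (∑ q ∈ pairs N, ((p q : ℂ)/2) •
        ((1 : Matrix (Fin N → Fin 2) (Fin N → Fin 2) ℂ)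
          - ((s q : ℂ) * (-1:ℂ) ^ ((z q.1).val + (z q.2).val)) • ZZt q.1 q.2)) * Hall N
      = ∑ q ∈ pairs N, ((p q : ℂ)/2) •
        ((1 : Matrix (Fin N → Fin 2) (Fin N → Fin 2) ℂ)
          - ((1:ℂ) * ((s q : ℂ) * (-1:ℂ) ^ ((z q.1).val + (z q.2).val))) • XXt q.1 q.2) := by
    rw [Finset.mul_sum, Finset.sum_mul]
    refine Finset.sum_congr rfl fun q hq => ?_
    exact conj_aff_sub Hall_mul_Hall ((Hall_ZZt_Hall (i := q.1) (j := q.2)).trans (one_smul ℂ _).symm) _ _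
  rw [hHconj, conj_ham p s x z]
  conv_rhs => lhs; rw [← hsum_one p hpsum]
  rw [Finset.smul_sum, Finset.smul_sum, ← Finset.sum_add_distrib, ← Finset.sum_sub_distrib]
  refine Finset.sum_congr rfl fun q hq => ?_
  exact quad_id (ZZt q.1 q.2) (XXt q.1 q.2) (p q) (s q)
    ((-1:ℂ) ^ ((x q.1).val + (x q.2).val)) ((-1:ℂ) ^ ((z q.1).val + (z q.2).val))

end Aux

/-- extractor identity for the trusted-center protocol: with
`η = (1/2^N)∑_{x,z} Z^z X^x Π_{x,z} X^x Z^z`, the acceptance probability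
`(1/2^{N+1})∑_{h,m,x,z} Tr[Π_{x,z}(H^⊗N)^h|m⟩⟨m|(H^⊗N)^h] ⋅ ∑_{i<j}p_{ij}(1−s_{ij}(−1)^{m'_i+m'_j})/2`
equals `1 − Tr(𝓗η)`; hence acceptance probability `≥ 1 − ε` implies `Tr(𝓗η) ≤ ε`. -/
theorem statement15 (N : ℕ) (hN : 2 ≤ N) (p s : Fin N × Fin N → ℝ)
    (hp : ∀ q ∈ pairs N, 0 < p q) (hpsum : ∑ q ∈ pairs N, p q = 1)
    (hs : ∀ q ∈ pairs N, s q = 1 ∨ s q = -1)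
    (Pv : (Fin N → Fin 2) × (Fin N → Fin 2) → Matrix (Fin N → Fin 2) (Fin N → Fin 2) ℂ)
    (hpos : ∀ xz, (Pv xz).PosSemidef)
    (hsum : ∑ xz : (Fin N → Fin 2) × (Fin N → Fin 2), Pv xz = 1)
    (ε : ℝ) :
    (((2:ℂ)^(N+1))⁻¹ * ∑ h : Fin 2, ∑ m : Fin N → Fin 2,
        ∑ xz : (Fin N → Fin 2) × (Fin N → Fin 2),
          (Pv xz * (Hall N ^ h.val * Matrix.single m m (1:ℂ) * Hall N ^ h.val)).trace *
            wgt p s (mprime h m xz.1 xz.2))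
      = 1 - (ham p s * (((2:ℂ)^N)⁻¹ • ∑ xz : (Fin N → Fin 2) × (Fin N → Fin 2),
            Zpow xz.2 * Xpow xz.1 * Pv xz * Xpow xz.1 * Zpow xz.2)).trace ∧
    (1 - ε ≤ (((2:ℂ)^(N+1))⁻¹ * ∑ h : Fin 2, ∑ m : Fin N → Fin 2,
        ∑ xz : (Fin N → Fin 2) × (Fin N → Fin 2),
          (Pv xz * (Hall N ^ h.val * Matrix.single m m (1:ℂ) * Hall N ^ h.val)).trace *
            wgt p s (mprime h m xz.1 xz.2)).re →
      ((ham p s * (((2:ℂ)^N)⁻¹ • ∑ xz : (Fin N → Fin 2) × (Fin N → Fin 2),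
            Zpow xz.2 * Xpow xz.1 * Pv xz * Xpow xz.1 * Zpow xz.2)).trace).re ≤ ε) := by
  -- abbreviations
  set C : (Fin N → Fin 2) × (Fin N → Fin 2) → Matrix (Fin N → Fin 2) (Fin N → Fin 2) ℂ :=
    fun xz => Xpow xz.1 * Zpow xz.2 * ham p s * Zpow xz.2 * Xpow xz.1 with hC
  -- Step 1: main equality
  have main : (((2:ℂ)^(N+1))⁻¹ * ∑ h : Fin 2, ∑ m : Fin N → Fin 2,
        ∑ xz : (Fin N → Fin 2) × (Fin N → Fin 2),
          (Pv xz * (Hall N ^ h.val * Matrix.single m m (1:ℂ) * Hall N ^ h.val)).trace *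
            wgt p s (mprime h m xz.1 xz.2))
      = 1 - (ham p s * (((2:ℂ)^N)⁻¹ • ∑ xz : (Fin N → Fin 2) × (Fin N → Fin 2),
            Zpow xz.2 * Xpow xz.1 * Pv xz * Xpow xz.1 * Zpow xz.2)).trace := by
    -- reorder sums: h, m, xz ↦ xz, h, m
    have hswap : (∑ h : Fin 2, ∑ m : Fin N → Fin 2,
          ∑ xz : (Fin N → Fin 2) × (Fin N → Fin 2),
            (Pv xz * (Hall N ^ h.val * Matrix.single m m (1:ℂ) * Hall N ^ h.val)).trace *
              wgt p s (mprime h m xz.1 xz.2))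
        = ∑ xz : (Fin N → Fin 2) × (Fin N → Fin 2), ∑ h : Fin 2, ∑ m : Fin N → Fin 2,
            (Pv xz * (Hall N ^ h.val * Matrix.single m m (1:ℂ) * Hall N ^ h.val)).trace *
              wgt p s (mprime h m xz.1 xz.2) := by
      have e1 : ∀ h : Fin 2, (∑ m : Fin N → Fin 2, ∑ xz : (Fin N → Fin 2) × (Fin N → Fin 2),
            (Pv xz * (Hall N ^ h.val * Matrix.single m m (1:ℂ) * Hall N ^ h.val)).trace *
              wgt p s (mprime h m xz.1 xz.2))
          = ∑ xz : (Fin N → Fin 2) × (Fin N → Fin 2), ∑ m : Fin N → Fin 2,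
            (Pv xz * (Hall N ^ h.val * Matrix.single m m (1:ℂ) * Hall N ^ h.val)).trace *
              wgt p s (mprime h m xz.1 xz.2) := fun h => Finset.sum_comm
      simp only [e1]
      exact Finset.sum_comm
    rw [hswap]
    -- inner sums
    have hinner : ∀ (xz : (Fin N → Fin 2) × (Fin N → Fin 2)),
        (∑ h : Fin 2, ∑ m : Fin N → Fin 2,
          (Pv xz * (Hall N ^ h.val * Matrix.single m m (1:ℂ) * Hall N ^ h.val)).trace *
            wgt p s (mprime h m xz.1 xz.2))
        = (2:ℂ) * (Pv xz).trace - (2:ℂ) * (Pv xz * C xz).trace := by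
      intro xz
      have hm : ∀ h : Fin 2, (∑ m : Fin N → Fin 2,
            (Pv xz * (Hall N ^ h.val * Matrix.single m m (1:ℂ) * Hall N ^ h.val)).trace *
              wgt p s (mprime h m xz.1 xz.2))
          = (Pv xz * (Hall N ^ h.val *
              Matrix.diagonal (fun m => wgt p s (mprime h m xz.1 xz.2)) * Hall N ^ h.val)).trace := by
        intro h
        rw [diag_eq_sum]
        simp only [Matrix.mul_sum, Matrix.sum_mul, Matrix.mul_smul, Matrix.smul_mul,
          Matrix.trace_sum, Matrix.trace_smul, smul_eq_mul]
        exact Finset.sum_congr rfl fun m _ => mul_comm _ _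
      rw [Fin.sum_univ_two, hm 0, hm 1]
      have h0 : ((0 : Fin 2)).val = 0 := rfl
      have h1 : ((1 : Fin 2)).val = 1 := rfl
      rw [h0, h1, pow_zero, pow_one, one_mul, mul_one]
      rw [← Matrix.trace_add, ← mul_add, keyid p s hpsum xz.1 xz.2]
      rw [mul_sub, Matrix.mul_smul, Matrix.mul_smul, Matrix.trace_sub, Matrix.trace_smul,
        Matrix.trace_smul, mul_one, smul_eq_mul, smul_eq_mul]
    simp only [hinner]
    rw [Finset.sum_sub_distrib, ← Finset.mul_sum, ← Finset.mul_sum]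
    have htr1 : (∑ xz : (Fin N → Fin 2) × (Fin N → Fin 2), (Pv xz).trace) = (2:ℂ)^N := by
      rw [← Matrix.trace_sum, hsum, Matrix.trace_one]
      have : Fintype.card (Fin N → Fin 2) = 2 ^ N := by simp
      rw [this]; push_cast; ring
    have htr2 : ∀ xz : (Fin N → Fin 2) × (Fin N → Fin 2), (Pv xz * C xz).trace
        = (ham p s * (Zpow xz.2 * Xpow xz.1 * Pv xz * Xpow xz.1 * Zpow xz.2)).trace := by
      intro xz
      have e1 : Pv xz * C xz
          = (Pv xz * (Xpow xz.1 * Zpow xz.2)) * (ham p s * (Zpow xz.2 * Xpow xz.1)) := by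
        rw [hC]; simp only [mul_assoc]
      have e2 : (ham p s * (Zpow xz.2 * Xpow xz.1)) * (Pv xz * (Xpow xz.1 * Zpow xz.2))
          = ham p s * (Zpow xz.2 * Xpow xz.1 * Pv xz * Xpow xz.1 * Zpow xz.2) := by
        simp only [mul_assoc]
      rw [e1, Matrix.trace_mul_comm, e2]
    simp only [htr2]
    rw [Matrix.mul_smul, Matrix.trace_smul, Matrix.mul_sum, Matrix.trace_sum, smul_eq_mul, htr1]
    have h2 : (2:ℂ) ≠ 0 := two_ne_zero
    have hpow : ((2:ℂ)^N) ≠ 0 := pow_ne_zero _ h2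
    have hpow1 : ((2:ℂ)^(N+1)) ≠ 0 := pow_ne_zero _ h2
    field_simp
    ring
  refine ⟨main, fun hacc => ?_⟩
  rw [main, Complex.sub_re, Complex.one_re] at hacc
  linarith

end
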